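/- arXiv:2602.09208 — 3 statements merged into one kernel-verified Lean document; each statement's English description precedes it below -/
import Mathlib

section
/- For a one-sided test of θ=θ₀ vs θ=θ₁ with Normal data of known variance σ², define the frequentist sample size n_F = (z_α+z_β)²(σ/δ)² where δ=θ₁−θ₀>0, z_α=Φ⁻¹(1−α), z_β=Φ⁻¹(1−β). Define the Bayesian goal function G_B(n) = Kπ·Φ(σlog(Kπ/(1−π))/(√n δ) + δ√n/(2σ)) + (1−π)·Φ(δ√n/(2σ) − σlog(Kπ/(1−π))/(√n δ)). Then G_B(n_F) = Kπ·Φ(log(Kπ/(1−π))/(z_α+z_β) + (z_α+z_β)/2) + (1−π)·Φ((z_α+z_β)/2 − log(Kπ/(1−π))/(z_α+z_β)), which depends only on (α,β,π,K) and not on δ or σ. -/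
/-! At `n_F` one has `√n_F · δ / σ = z_α + z_β`, and the two arguments of `Φ` in `G_B(n)` depend on
`n`, `δ` and `σ` only through this standardized effect size `√n δ / σ`. -/

namespace SampleSize

variable {c σ δ : ℝ}

theorem sqrt_sq_mul_div_sq (hc : 0 ≤ c) (hσ : 0 ≤ σ) (hδ : 0 ≤ δ) :
    Real.sqrt (c ^ 2 * (σ / δ) ^ 2) = c * (σ / δ) := by
  rw [← mul_pow, Real.sqrt_sq (by positivity)]

theorem mul_div_mul_scale_mul (L : ℝ) (hc : c ≠ 0) (hσ : σ ≠ 0) (hδ : δ ≠ 0) :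
    σ * L / (c * (σ / δ) * δ) = L / c := by
  field_simp

theorem mul_scale_div_two_mul (c : ℝ) (hσ : σ ≠ 0) (hδ : δ ≠ 0) :
    δ * (c * (σ / δ)) / (2 * σ) = c / 2 := by
  field_simp

end SampleSize

open SampleSize in
theorem stmt0_general (Φ : ℝ → ℝ) (πH K σ δ zα zβ : ℝ)
    (hσ : 0 < σ) (hδ : 0 < δ)
    (hz : 0 < zα + zβ)
    (G : ℝ → ℝ)
    (hG : ∀ n : ℝ, G n =
      K * πH * Φ (σ * Real.log (K * πH / (1 - πH)) / (Real.sqrt n * δ)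
        + δ * Real.sqrt n / (2 * σ))
      + (1 - πH) * Φ (δ * Real.sqrt n / (2 * σ)
        - σ * Real.log (K * πH / (1 - πH)) / (Real.sqrt n * δ)))
    (nF : ℝ) (hnF : nF = (zα + zβ)^2 * (σ / δ)^2) :
    G nF = K * πH * Φ (Real.log (K * πH / (1 - πH)) / (zα + zβ) + (zα + zβ) / 2)
      + (1 - πH) * Φ ((zα + zβ) / 2 - Real.log (K * πH / (1 - πH)) / (zα + zβ)) := by
  rw [hG, hnF, sqrt_sq_mul_div_sq hz.le hσ.le hδ.le,
    mul_div_mul_scale_mul _ hz.ne' hσ.ne' hδ.ne', mul_scale_div_two_mul _ hσ.ne' hδ.ne']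

/-- Inoue et al.: the Bayesian goal function evaluated at the frequentist
sample size depends only on (α, β, π, K), not on δ or σ. -/
theorem stmt0 (Φ : ℝ → ℝ) (α β πH K σ δ zα zβ : ℝ)
    (hπ : πH ∈ Set.Ioo (0:ℝ) 1) (hK : 0 < K) (hσ : 0 < σ) (hδ : 0 < δ)
    (hz : 0 < zα + zβ) (hzα : Φ zα = 1 - α) (hzβ : Φ zβ = 1 - β)
    (G : ℝ → ℝ)
    (hG : ∀ n : ℝ, G n =
      K * πH * Φ (σ * Real.log (K * πH / (1 - πH)) / (Real.sqrt n * δ)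
        + δ * Real.sqrt n / (2 * σ))
      + (1 - πH) * Φ (δ * Real.sqrt n / (2 * σ)
        - σ * Real.log (K * πH / (1 - πH)) / (Real.sqrt n * δ)))
    (nF : ℝ) (hnF : nF = (zα + zβ)^2 * (σ / δ)^2) :
    G nF = K * πH * Φ (Real.log (K * πH / (1 - πH)) / (zα + zβ) + (zα + zβ) / 2)
      + (1 - πH) * Φ ((zα + zβ) / 2 - Real.log (K * πH / (1 - πH)) / (zα + zβ)) :=
  stmt0_general Φ πH K σ δ zα zβ hσ hδ hz G hG nF hnF
end

section
/- Let p₁ ~ Beta(a₁,b₁) and p₂ ~ Beta(a₂,b₂) be independent with positive integer parameters. Then P(p₂ > p₁) equals a finite sum over the joint probability that in a Pólya urn representation the appropriate ordering occurs; in particular for uniform priors updated by (r₁ successes, s₁ failures) and (r₂ successes, s₂ failures), P(p̃₂ > p̃₁ | data) = [Σ_{α=0}^{r₂} C(r₁+r₂−α, r₁)·C(s₁+s₂+1+α, s₁)] / C(n₁+n₂+2, n₁+1), where nᵢ = rᵢ + sᵢ. -/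
/-!
Write `f a b` for the Beta(a+1, b+1) density and `P k n = ∫₀¹ f k n · F`, where `F` is the
distribution function of Beta(r₁+1, s₁+1). The difference `f (k+1) n - f k (n+1)` is the derivative
of `-C(k+n+2, k+1) xᵏ⁺¹ (1-x)ⁿ⁺¹`, which vanishes at `1`, while `F 0 = 0`; so integrating by parts
against `F` gives `P (k+1) n = P k (n+1) + T (k+1) n`, and likewise `P 0 n = T 0 n`, with `T` an
integral of a product of two Beta kernels, hence a ratio of binomials. Unrolling the recursion in
`k` yields Thompson's sum. Integrating the same derivative identity shows that every `f a b` has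
mass one, which evaluates the Beta integrals.
-/

open intervalIntegral Nat

namespace Thompson

/-- The density of Beta(a+1, b+1) on `[0, 1]` (exponents are the shape parameters minus one). -/
noncomputable def betaPdf (a b : ℕ) (x : ℝ) : ℝ :=
  ((a + b + 1)! : ℝ) / ((a ! : ℝ) * (b ! : ℝ)) * x ^ a * (1 - x) ^ b

lemma hasDerivAt_one_sub_pow (n : ℕ) (x : ℝ) :
    HasDerivAt (fun x : ℝ => (1 - x) ^ n) (-(n * (1 - x) ^ (n - 1))) x := by
  simpa using ((hasDerivAt_id' x).const_sub 1).fun_pow n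

lemma hasDerivAt_neg_one_sub_pow_succ (n : ℕ) (x : ℝ) :
    HasDerivAt (fun x : ℝ => -(1 - x) ^ (n + 1)) (betaPdf 0 n x) x := by
  refine (hasDerivAt_one_sub_pow (n + 1) x).neg.congr_deriv ?_
  simp only [betaPdf, factorial_zero, cast_one, zero_add, factorial_succ n, pow_zero, mul_one,
    add_tsub_cancel_right, neg_neg]
  have : (n ! : ℝ) ≠ 0 := by positivity
  push_cast
  field_simp

lemma hasDerivAt_neg_choose_mul_pow_mul_one_sub_pow (k n : ℕ) (x : ℝ) :
    HasDerivAt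
      (fun x : ℝ => -(((k + 1 + n + 1).choose (k + 1) : ℝ) * x ^ (k + 1) * (1 - x) ^ (n + 1)))
      (betaPdf (k + 1) n x - betaPdf k (n + 1) x) x := by
  refine ((((hasDerivAt_pow (k + 1) x).const_mul _).fun_mul
    (hasDerivAt_one_sub_pow (n + 1) x)).neg).congr_deriv ?_
  rw [show k + 1 + n + 1 = k + 1 + (n + 1) by ring, cast_add_choose, betaPdf, betaPdf,
    show k + 1 + n + 1 = k + 1 + (n + 1) by ring, show k + (n + 1) + 1 = k + 1 + (n + 1) by ring]
  simp only [factorial_succ, cast_mul, cast_add, cast_one, add_tsub_cancel_right]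
  have : (n ! : ℝ) ≠ 0 := by positivity
  have : (k ! : ℝ) ≠ 0 := by positivity
  field_simp
  ring

@[fun_prop]
lemma continuous_betaPdf (a b : ℕ) : Continuous (betaPdf a b) := by
  unfold betaPdf; fun_prop

lemma integral_betaPdf_succ_left (k n : ℕ) :
    ∫ x in (0:ℝ)..1, betaPdf (k + 1) n x = ∫ x in (0:ℝ)..1, betaPdf k (n + 1) x := by
  have h : ∫ x in (0:ℝ)..1, (betaPdf (k + 1) n x - betaPdf k (n + 1) x) = 0 := by
    rw [integral_eq_sub_of_hasDerivAt
      (fun x _ => hasDerivAt_neg_choose_mul_pow_mul_one_sub_pow k n x)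
      ((by fun_prop : Continuous _).intervalIntegrable 0 1)]
    simp
  rwa [integral_sub ((continuous_betaPdf _ _).intervalIntegrable 0 1)
    ((continuous_betaPdf _ _).intervalIntegrable 0 1), sub_eq_zero] at h

lemma integral_betaPdf (a b : ℕ) : ∫ x in (0:ℝ)..1, betaPdf a b x = 1 := by
  induction b generalizing a with
  | zero =>
    simp only [betaPdf, pow_zero, mul_one, integral_const_mul, integral_pow, factorial_succ]
    have : (a ! : ℝ) ≠ 0 := by positivity
    push_cast
    field_simp
    simp
  | succ b ih => rw [← integral_betaPdf_succ_left, ih]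

lemma integral_pow_mul_one_sub_pow (a b : ℕ) :
    ∫ x in (0:ℝ)..1, x ^ a * (1 - x) ^ b = (a ! * b ! : ℝ) / (a + b + 1)! := by
  have h := integral_betaPdf a b
  simp only [betaPdf, mul_assoc, integral_const_mul] at h
  have : ((a + b + 1)! : ℝ) ≠ 0 := by positivity
  field_simp at h ⊢
  linarith

noncomputable def betaCdf (a b : ℕ) (x : ℝ) : ℝ := ∫ y in (0:ℝ)..x, betaPdf a b y

lemma hasDerivAt_betaCdf (a b : ℕ) (x : ℝ) : HasDerivAt (betaCdf a b) (betaPdf a b x) x :=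
  ((continuous_betaPdf a b).integral_hasStrictDerivAt 0 x).hasDerivAt

@[fun_prop]
lemma continuous_betaCdf (a b : ℕ) : Continuous (betaCdf a b) :=
  continuous_iff_continuousAt.2 fun x => (hasDerivAt_betaCdf a b x).continuousAt

lemma integral_deriv_mul_betaCdf {u u' : ℝ → ℝ} (a b : ℕ) (hu : ∀ x, HasDerivAt u (u' x) x)
    (hu' : Continuous u') (hu1 : u 1 = 0) :
    ∫ x in (0:ℝ)..1, u' x * betaCdf a b x = -∫ x in (0:ℝ)..1, u x * betaPdf a b x := by
  have h := integral_mul_deriv_eq_deriv_mul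
    (fun x _ => hasDerivAt_betaCdf a b x) (fun x _ => hu x)
    ((continuous_betaPdf a b).intervalIntegrable 0 1) (hu'.intervalIntegrable 0 1)
  simp only [hu1, betaCdf, integral_same, mul_zero, zero_mul, sub_zero, zero_sub] at h
  simp only [mul_comm (u' _), mul_comm (u _), betaCdf, h]

variable (r₁ s₁ : ℕ)

noncomputable def probLt (r₂ s₂ : ℕ) : ℝ :=
  ∫ x in (0:ℝ)..1, betaPdf r₂ s₂ x * betaCdf r₁ s₁ x

noncomputable def thompsonTerm (k n : ℕ) : ℝ :=
  ((r₁ + k).choose r₁ * (s₁ + n + 1).choose s₁ : ℝ) / (r₁ + s₁ + k + n + 2).choose (r₁ + s₁ + 1)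

lemma integral_choose_mul_pow_mul_one_sub_pow_mul_betaPdf (k n : ℕ) :
    ∫ x in (0:ℝ)..1, ((k + n + 1).choose k : ℝ) * x ^ k * (1 - x) ^ (n + 1) * betaPdf r₁ s₁ x
      = thompsonTerm r₁ s₁ k n := by
  have hintegrand : ∀ x : ℝ,
      ((k + n + 1).choose k : ℝ) * x ^ k * (1 - x) ^ (n + 1) * betaPdf r₁ s₁ x =
        ((k + n + 1).choose k : ℝ) * (((r₁ + s₁ + 1)! : ℝ) / ((r₁ ! : ℝ) * (s₁ ! : ℝ)) *
        (x ^ (r₁ + k) * (1 - x) ^ (s₁ + (n + 1)))) :=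
    fun x => by rw [betaPdf]; ring
  simp only [hintegrand, integral_const_mul, integral_pow_mul_one_sub_pow, thompsonTerm]
  rw [show k + n + 1 = k + (n + 1) by ring, show s₁ + n + 1 = s₁ + (n + 1) by ring,
    show r₁ + s₁ + k + n + 2 = r₁ + s₁ + 1 + (k + (n + 1)) by ring,
    show r₁ + k + (s₁ + (n + 1)) + 1 = r₁ + s₁ + 1 + (k + (n + 1)) by ring]
  simp only [cast_add_choose]
  field_simp

lemma probLt_zero_left (n : ℕ) : probLt r₁ s₁ 0 n = thompsonTerm r₁ s₁ 0 n := by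
  rw [probLt, integral_deriv_mul_betaCdf r₁ s₁ (hasDerivAt_neg_one_sub_pow_succ n)
    (continuous_betaPdf 0 n) (by simp), ← integral_choose_mul_pow_mul_one_sub_pow_mul_betaPdf]
  simp

lemma probLt_succ_left (k n : ℕ) :
    probLt r₁ s₁ (k + 1) n = probLt r₁ s₁ k (n + 1) + thompsonTerm r₁ s₁ (k + 1) n := by
  have h := integral_deriv_mul_betaCdf r₁ s₁ (hasDerivAt_neg_choose_mul_pow_mul_one_sub_pow k n)
    (by fun_prop) (by simp)
  simp only [sub_mul, neg_mul, integral_neg, neg_neg] at h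
  rw [integral_sub ((by fun_prop : Continuous _).intervalIntegrable 0 1)
    ((by fun_prop : Continuous _).intervalIntegrable 0 1),
    integral_choose_mul_pow_mul_one_sub_pow_mul_betaPdf] at h
  rw [probLt, probLt, ← h]
  ring

lemma probLt_eq_sum (k n : ℕ) :
    probLt r₁ s₁ k n = ∑ α ∈ Finset.range (k + 1), thompsonTerm r₁ s₁ (k - α) (n + α) := by
  induction k generalizing n with
  | zero => simp [probLt_zero_left]
  | succ k ih =>
    rw [probLt_succ_left, ih,
      Finset.sum_range_succ' (fun α => thompsonTerm r₁ s₁ (k + 1 - α) (n + α))]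
    simp only [add_tsub_add_eq_tsub_right, Nat.sub_zero, add_zero, add_assoc, add_comm 1]

end Thompson

/-- Thompson's (1933) exact formula: with independent posteriors
p̃ᵢ ~ Beta(rᵢ+1, sᵢ+1) (uniform priors updated by rᵢ successes, sᵢ failures),
P(p̃₂ > p̃₁) = [Σ_{α=0}^{r₂} C(r₁+r₂-α,r₁)·C(s₁+s₂+1+α,s₁)] / C(n₁+n₂+2, n₁+1). -/
theorem stmt6 (r₁ s₁ r₂ s₂ : ℕ) :
    (∫ x in (0:ℝ)..1,
        ((((r₂ + s₂ + 1).factorial : ℝ) / ((r₂.factorial : ℝ) * (s₂.factorial : ℝ)))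
            * x ^ r₂ * (1 - x) ^ s₂) *
        ∫ y in (0:ℝ)..x,
          ((((r₁ + s₁ + 1).factorial : ℝ) / ((r₁.factorial : ℝ) * (s₁.factorial : ℝ)))
            * y ^ r₁ * (1 - y) ^ s₁)
      = (∑ α ∈ Finset.range (r₂ + 1),
          (((r₁ + r₂ - α).choose r₁ : ℝ) * ((s₁ + s₂ + 1 + α).choose s₁ : ℝ)))
        / (((r₁ + s₁) + (r₂ + s₂) + 2).choose ((r₁ + s₁) + 1) : ℝ)) := by
  change Thompson.probLt r₁ s₁ r₂ s₂ = _
  rw [Thompson.probLt_eq_sum, Finset.sum_div]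
  refine Finset.sum_congr rfl fun α hα => ?_
  have hα : α ≤ r₂ := Finset.mem_range_succ_iff.mp hα
  rw [Thompson.thompsonTerm, show r₁ + (r₂ - α) = r₁ + r₂ - α by omega,
    show s₁ + (s₂ + α) + 1 = s₁ + s₂ + 1 + α by omega,
    show r₁ + s₁ + (r₂ - α) + (s₂ + α) + 2 = r₁ + s₁ + (r₂ + s₂) + 2 by omega]
end

section
/- Conditional on Pólya-Gamma latent variables ω_j, the logistic regression posterior for β with Gaussian prior N(b₀,B₀) is exactly Gaussian: β | Y, ω ~ N(m_n, V_n) with V_n = (B₀⁻¹ + X'ΩX)⁻¹ and m_n = V_n(B₀⁻¹b₀ + X'κ), where Ω = diag(ω₁,…,ω_n) and κ_j = y_j − 1/2. -/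
/-!
The augmented log-likelihood is `β'X'κ - ½ β'X'ΩXβ` and the log-prior is
`-½ (β - b₀)'B₀⁻¹(β - b₀)`. Their sum is a quadratic in `β` with quadratic part
`-½ β'Vₙ⁻¹β` and linear part `β'(B₀⁻¹b₀ + X'κ) = β'Vₙ⁻¹mₙ`; since `Vₙ⁻¹` is symmetric,
completing the square around `mₙ` leaves only a `β`-free constant.
-/

open Matrix

namespace Matrix

variable {ι κ R K : Type*} [Fintype ι] [Fintype κ]

theorem IsSymm.dotProduct_mulVec_comm [CommSemiring R] {M : Matrix ι ι R} (hM : M.IsSymm)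
    (u v : ι → R) : u ⬝ᵥ M *ᵥ v = v ⬝ᵥ M *ᵥ u := by
  rw [dotProduct_mulVec, ← mulVec_transpose, hM.eq, dotProduct_comm]

theorem IsSymm.dotProduct_mulVec_sub_sub [CommRing R] {M : Matrix ι ι R} (hM : M.IsSymm)
    (u w : ι → R) :
    (u - w) ⬝ᵥ M *ᵥ (u - w) = u ⬝ᵥ M *ᵥ u - 2 * (u ⬝ᵥ M *ᵥ w) + w ⬝ᵥ M *ᵥ w := by
  rw [mulVec_sub, sub_dotProduct, dotProduct_sub, dotProduct_sub, hM.dotProduct_mulVec_comm w u]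
  ring

theorem IsSymm.complete_square [Field K] [CharZero K] {A : Matrix ι ι K} (hA : A.IsSymm)
    {m h : ι → K} (hm : A *ᵥ m = h) (β : ι → K) :
    β ⬝ᵥ h - 1 / 2 * (β ⬝ᵥ A *ᵥ β)
      = -(1 / 2) * ((β - m) ⬝ᵥ A *ᵥ (β - m)) + 1 / 2 * (m ⬝ᵥ A *ᵥ m) := by
  rw [hA.dotProduct_mulVec_sub_sub, hm]
  ring

omit [Fintype ι] in
theorem isSymm_transpose_mul_diagonal_mul [CommSemiring R] [DecidableEq κ] (X : Matrix κ ι R)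
    (w : κ → R) : (Xᵀ * diagonal w * X).IsSymm := by
  simp [IsSymm, transpose_mul, Matrix.mul_assoc]

theorem dotProduct_mulVec_eq_dotProduct_transpose_mulVec [CommSemiring R] (X : Matrix κ ι R)
    (c : κ → R) (β : ι → R) : c ⬝ᵥ X *ᵥ β = β ⬝ᵥ Xᵀ *ᵥ c := by
  rw [dotProduct_mulVec, ← mulVec_transpose, dotProduct_comm]

theorem sum_mul_mulVec_sq [CommSemiring R] [DecidableEq κ] (X : Matrix κ ι R) (w : κ → R)
    (β : ι → R) : ∑ j, w j * (X *ᵥ β) j ^ 2 = β ⬝ᵥ (Xᵀ * diagonal w * X) *ᵥ β := by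
  rw [← mulVec_mulVec, ← mulVec_mulVec, ← dotProduct_mulVec_eq_dotProduct_transpose_mulVec]
  simp only [dotProduct, mulVec_diagonal]
  exact Finset.sum_congr rfl fun j _ => by ring

theorem sum_mul_mulVec_sub_mul_mulVec_sq_div_two [Field K] [DecidableEq κ] (X : Matrix κ ι K)
    (c w : κ → K) (β : ι → K) :
    ∑ j, (c j * (X *ᵥ β) j - w j * (X *ᵥ β) j ^ 2 / 2)
      = β ⬝ᵥ Xᵀ *ᵥ c - 1 / 2 * (β ⬝ᵥ (Xᵀ * diagonal w * X) *ᵥ β) := by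
  rw [Finset.sum_sub_distrib, ← Finset.sum_div, sum_mul_mulVec_sq,
    ← dotProduct_mulVec_eq_dotProduct_transpose_mulVec]
  simp only [dotProduct]
  ring

end Matrix

theorem stmt15_general (n p : ℕ)
    (X : Matrix (Fin n) (Fin p) ℝ) (y : Fin n → ℝ) (ω : Fin n → ℝ)
    (b₀ : Fin p → ℝ) (B₀inv : Matrix (Fin p) (Fin p) ℝ)
    (hB : B₀inv.PosDef)
    (Vn : Matrix (Fin p) (Fin p) ℝ)
    (hVn : Vn * (B₀inv + Xᵀ * Matrix.diagonal ω * X) = 1)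
    (mn : Fin p → ℝ)
    (hmn : mn = Vn.mulVec (B₀inv.mulVec b₀ + Xᵀ.mulVec (fun j => y j - 1/2))) :
    ∃ C : ℝ, ∀ β : Fin p → ℝ,
      (∑ j, ((y j - 1/2) * X.mulVec β j - ω j * (X.mulVec β j) ^ 2 / 2))
        - (1/2) * ((β - b₀) ⬝ᵥ B₀inv.mulVec (β - b₀))
      = -(1/2) * ((β - mn) ⬝ᵥ (B₀inv + Xᵀ * Matrix.diagonal ω * X).mulVec (β - mn))
          + C := by
  set κ : Fin n → ℝ := fun j => y j - 1/2
  set A := B₀inv + Xᵀ * diagonal ω * X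
  have hB₀ : B₀inv.IsSymm := isHermitian_iff_isSymm.mp hB.isHermitian
  have hA : A.IsSymm := hB₀.add (isSymm_transpose_mul_diagonal_mul X ω)
  have hAmn : A *ᵥ mn = B₀inv *ᵥ b₀ + Xᵀ *ᵥ κ := by
    rw [hmn, mulVec_mulVec, mul_eq_one_comm.mp hVn, one_mulVec]
  refine ⟨1 / 2 * (mn ⬝ᵥ A *ᵥ mn) - 1 / 2 * (b₀ ⬝ᵥ B₀inv *ᵥ b₀), fun β => ?_⟩
  have hsquare := hA.complete_square hAmn β
  rw [dotProduct_add, add_mulVec, dotProduct_add] at hsquare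
  rw [sum_mul_mulVec_sub_mul_mulVec_sq_div_two, hB₀.dotProduct_mulVec_sub_sub]
  linear_combination hsquare

/-- Conditional on Pólya-Gamma latent variables ω, the logistic regression
posterior for β with Gaussian prior N(b₀, B₀) is exactly Gaussian N(mₙ, Vₙ)
with Vₙ⁻¹ = B₀⁻¹ + X'ΩX and mₙ = Vₙ(B₀⁻¹b₀ + X'κ), κⱼ = yⱼ - 1/2: at the
log-density level, the augmented log-likelihood plus log-prior equals the
Gaussian quadratic form in (β - mₙ) up to an additive constant. -/
theorem stmt15 (n p : ℕ)
    (X : Matrix (Fin n) (Fin p) ℝ) (y : Fin n → ℝ) (ω : Fin n → ℝ)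
    (b₀ : Fin p → ℝ) (B₀inv : Matrix (Fin p) (Fin p) ℝ)
    (hB : B₀inv.PosDef) (hω : ∀ j, 0 < ω j)
    (Vn : Matrix (Fin p) (Fin p) ℝ)
    (hVn : Vn * (B₀inv + Xᵀ * Matrix.diagonal ω * X) = 1)
    (mn : Fin p → ℝ)
    (hmn : mn = Vn.mulVec (B₀inv.mulVec b₀ + Xᵀ.mulVec (fun j => y j - 1/2))) :
    ∃ C : ℝ, ∀ β : Fin p → ℝ,
      (∑ j, ((y j - 1/2) * X.mulVec β j - ω j * (X.mulVec β j) ^ 2 / 2))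
        - (1/2) * ((β - b₀) ⬝ᵥ B₀inv.mulVec (β - b₀))
      = -(1/2) * ((β - mn) ⬝ᵥ (B₀inv + Xᵀ * Matrix.diagonal ω * X).mulVec (β - mn))
          + C :=
  stmt15_general n p X y ω b₀ B₀inv hB Vn hVn mn hmn
end
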